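/- Type preservation for computations: if Γ ⊢ M : X!(o,ι) and M ⇝ N in the small-step operational semantics of computations, then Γ ⊢ N : X!(o,ι). -/
import Mathlib


/-- Interrupt handler annotations: elements of the greatest fixed point of
`Φ(X) = Op ⇒ (O × X)_⊥` where `O = Set Op`, encoded as prefix-closed partial
maps from nonempty paths (lists of operation names) to signal annotations. -/
structure IAnn (Op : Type) : Type where
  val : List Op → Option (Set Op)
  nil_none : val [] = none
  prefix_closed : ∀ l l', l ≠ [] → (val (l ++ l')).isSome → (val l).isSome

namespace IAnn

variable {Op : Type}

/-- The coinductive order `⊑_I` on interrupt handler annotations. -/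
def le (ι ι' : IAnn Op) : Prop :=
  ∀ l o, ι.val l = some o → ∃ o', ι'.val l = some o' ∧ o ⊆ o'

/-- The least annotation (everywhere ⊥). -/
def bot (Op : Type) : IAnn Op :=
  ⟨fun _ => none, rfl, fun _ _ _ h => by simp at h⟩

/-- Join on `(Set Op)_⊥`. -/
def ojoin (a b : Option (Set Op)) : Option (Set Op) :=
  match a, b with
  | some x, some y => some (x ∪ y)
  | some x, none => some x
  | none, y => y

lemma ojoin_isSome (a b : Option (Set Op)) :
    (ojoin a b).isSome ↔ a.isSome ∨ b.isSome := by
  cases a <;> cases b <;> simp [ojoin]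

/-- The pointwise join `ι ⊔ ι'` of interrupt handler annotations. -/
def join (ι ι' : IAnn Op) : IAnn Op where
  val l := ojoin (ι.val l) (ι'.val l)
  nil_none := by show ojoin (ι.val []) (ι'.val []) = none; rw [ι.nil_none, ι'.nil_none]; rfl
  prefix_closed := fun l l' hl h => by
    rcases (ojoin_isSome _ _).mp h with h | h
    · exact (ojoin_isSome _ _).mpr (Or.inl (ι.prefix_closed l l' hl h))
    · exact (ojoin_isSome _ _).mpr (Or.inr (ι'.prefix_closed l l' hl h))

/-- The subtree of `ι` at `op`, i.e. the second component of `ι(op)` when defined. -/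
def subtree (ι : IAnn Op) (op : Op) : IAnn Op where
  val l := match l with
    | [] => none
    | a :: t => ι.val (op :: a :: t)
  nil_none := rfl
  prefix_closed := fun l l' hl h => by
    match l with
    | [] => exact absurd rfl hl
    | a :: t =>
      simp only [List.cons_append] at h
      exact ι.prefix_closed (op :: a :: t) l' (by simp) h

variable [DecidableEq Op]

/-- `ι[op ↦ ⊥]`: set `ι` to be undefined at `op`. -/
def update (ι : IAnn Op) (op : Op) : IAnn Op where
  val l := match l with
    | [] => none
    | op' :: rest => if op' = op then none else ι.val (op' :: rest)
  nil_none := rfl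
  prefix_closed := fun l l' hl h => by
    match l with
    | [] => exact absurd rfl hl
    | a :: t =>
      simp only [List.cons_append] at h
      by_cases hao : a = op
      · simp [hao] at h
      · simp only [if_neg hao] at h ⊢
        exact ι.prefix_closed (a :: t) l' (by simp) h

/-- The singleton annotation `{ op ↦ (o, ι) }`. -/
def single (op : Op) (o : Set Op) (ι : IAnn Op) : IAnn Op where
  val l := match l with
    | [] => none
    | op' :: rest =>
        if op' = op then (if rest = [] then some o else ι.val rest) else none
  nil_none := rfl
  prefix_closed := fun l l' hl h => by
    match l with
    | [] => exact absurd rfl hl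
    | a :: t =>
      simp only [List.cons_append] at h
      by_cases hao : a = op
      · simp only [if_pos hao] at h ⊢
        match t with
        | [] => simp
        | b :: u =>
          simp only [List.cons_append] at h ⊢
          rw [if_neg (by simp)] at h
          rw [if_neg (by simp)]
          exact ι.prefix_closed (b :: u) l' (by simp) h
      · simp [hao] at h

/-- The action `op ↓ (o, ι)` of an interrupt on an effect annotation. -/
def act (op : Op) (p : Set Op × IAnn Op) : Set Op × IAnn Op :=
  match p.2.val [op] with
  | some o' => (p.1 ∪ o', join (update p.2 op) (p.2.subtree op))
  | none => p

/-- The product order `⊑_{O×I}` on effect annotations. -/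
def leOI (p q : Set Op × IAnn Op) : Prop := p.1 ⊆ q.1 ∧ le p.2 q.2

/-- The action `ops ↓↓ (o, ι)` of a list of interrupts on an effect annotation. -/
def actList : List Op → Set Op × IAnn Op → Set Op × IAnn Op
  | [], p => p
  | op :: ops, p => act op (actList ops p)

end IAnn

mutual
/-- Values of the λ_æ calculus (de Bruijn representation). -/
inductive Val (Op : Type) : Type where
  | var : ℕ → Val Op
  | unit : Val Op
  | pair : Val Op → Val Op → Val Op
  | inl : Val Op → Val Op
  | inr : Val Op → Val Op
  | lam : Comp Op → Val Op
  | prom : Val Op → Val Op                  -- fulfilled promise ⟨V⟩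
  | box : Val Op → Val Op                   -- boxed value [V]

/-- Computations of the λ_æ calculus (de Bruijn representation). -/
inductive Comp (Op : Type) : Type where
  | ret : Val Op → Comp Op
  | letin : Comp Op → Comp Op → Comp Op     -- let x = M in N   (N binds 1)
  | app : Val Op → Val Op → Comp Op
  | matchPair : Val Op → Comp Op → Comp Op  -- match V with ⟨x,y⟩ ↦ M  (M binds 2)
  | matchEmpty : Val Op → Comp Op
  | matchSum : Val Op → Comp Op → Comp Op → Comp Op  -- (each branch binds 1)
  | sig : Op → Val Op → Comp Op → Comp Op   -- ↑op(V, M)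
  | int : Op → Val Op → Comp Op → Comp Op   -- ↓op(V, M)
  | handler : Op → Comp Op → Val Op → Comp Op → Comp Op
      -- promise (op x r s ↦ M) @ V as p in N   (M binds 3: x,r,s; N binds 1: p)
  | await : Val Op → Comp Op → Comp Op      -- await V until ⟨x⟩ in M  (M binds 1)
  | unbox : Val Op → Comp Op → Comp Op      -- unbox V as [x] in M  (M binds 1)
  | spawn : Comp Op → Comp Op → Comp Op     -- spawn (M, N)
end

/-- Lifting a renaming under one binder. -/
def liftR (ρ : ℕ → ℕ) : ℕ → ℕ
  | 0 => 0
  | n + 1 => ρ n + 1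

mutual
def renameV {Op : Type} (ρ : ℕ → ℕ) : Val Op → Val Op
  | .var n => .var (ρ n)
  | .unit => .unit
  | .pair a b => .pair (renameV ρ a) (renameV ρ b)
  | .inl a => .inl (renameV ρ a)
  | .inr a => .inr (renameV ρ a)
  | .lam m => .lam (renameC (liftR ρ) m)
  | .prom a => .prom (renameV ρ a)
  | .box a => .box (renameV ρ a)

def renameC {Op : Type} (ρ : ℕ → ℕ) : Comp Op → Comp Op
  | .ret v => .ret (renameV ρ v)
  | .letin m n => .letin (renameC ρ m) (renameC (liftR ρ) n)
  | .app v w => .app (renameV ρ v) (renameV ρ w)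
  | .matchPair v m => .matchPair (renameV ρ v) (renameC (liftR (liftR ρ)) m)
  | .matchEmpty v => .matchEmpty (renameV ρ v)
  | .matchSum v m n =>
      .matchSum (renameV ρ v) (renameC (liftR ρ) m) (renameC (liftR ρ) n)
  | .sig op v m => .sig op (renameV ρ v) (renameC ρ m)
  | .int op v m => .int op (renameV ρ v) (renameC ρ m)
  | .handler op m v n =>
      .handler op (renameC (liftR (liftR (liftR ρ))) m) (renameV ρ v)
        (renameC (liftR ρ) n)
  | .await v m => .await (renameV ρ v) (renameC (liftR ρ) m)
  | .unbox v m => .unbox (renameV ρ v) (renameC (liftR ρ) m)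
  | .spawn m n => .spawn (renameC ρ m) (renameC ρ n)
end

/-- Lifting a substitution under one binder. -/
def liftS {Op : Type} (σ : ℕ → Val Op) : ℕ → Val Op
  | 0 => .var 0
  | n + 1 => renameV Nat.succ (σ n)

mutual
def substV {Op : Type} (σ : ℕ → Val Op) : Val Op → Val Op
  | .var n => σ n
  | .unit => .unit
  | .pair a b => .pair (substV σ a) (substV σ b)
  | .inl a => .inl (substV σ a)
  | .inr a => .inr (substV σ a)
  | .lam m => .lam (substC (liftS σ) m)
  | .prom a => .prom (substV σ a)
  | .box a => .box (substV σ a)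

def substC {Op : Type} (σ : ℕ → Val Op) : Comp Op → Comp Op
  | .ret v => .ret (substV σ v)
  | .letin m n => .letin (substC σ m) (substC (liftS σ) n)
  | .app v w => .app (substV σ v) (substV σ w)
  | .matchPair v m => .matchPair (substV σ v) (substC (liftS (liftS σ)) m)
  | .matchEmpty v => .matchEmpty (substV σ v)
  | .matchSum v m n =>
      .matchSum (substV σ v) (substC (liftS σ) m) (substC (liftS σ) n)
  | .sig op v m => .sig op (substV σ v) (substC σ m)
  | .int op v m => .int op (substV σ v) (substC σ m)
  | .handler op m v n =>
      .handler op (substC (liftS (liftS (liftS σ))) m) (substV σ v)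
        (substC (liftS σ) n)
  | .await v m => .await (substV σ v) (substC (liftS σ) m)
  | .unbox v m => .unbox (substV σ v) (substC (liftS σ) m)
  | .spawn m n => .spawn (substC σ m) (substC σ n)
end

/-- Substitution `[V/0]` of a single value for the last-bound variable. -/
def sub1 {Op : Type} (v : Val Op) : ℕ → Val Op
  | 0 => v
  | n + 1 => .var n

/-- Substitution `[V/1, W/0]` for the two variables of a pair match. -/
def sub2 {Op : Type} (v w : Val Op) : ℕ → Val Op
  | 0 => w
  | 1 => v
  | n + 2 => .var n

/-- Substitution `[V/x, R/r, W/s]` (`x = 2`, `r = 1`, `s = 0`) for the three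
variables of an interrupt handler body. -/
def sub3 {Op : Type} (v r w : Val Op) : ℕ → Val Op
  | 0 => w
  | 1 => r
  | 2 => v
  | n + 3 => .var n

/-- The reinstallation function
`R = fun s' ↦ promise (op x r s ↦ M) @ s' as p in return p`. -/
def reinstall {Op : Type} (op : Op) (M : Comp Op) : Val Op :=
  .lam (.handler op (renameC (liftR (liftR (liftR Nat.succ))) M)
          (.var 0) (.ret (.var 0)))

/-- Small-step operational semantics of computations. -/
inductive Step {Op : Type} : Comp Op → Comp Op → Prop where
  -- standard computation rules
  | beta {M V} : Step (.app (.lam M) V) (substC (sub1 V) M)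
  | letRet {V N} : Step (.letin (.ret V) N) (substC (sub1 V) N)
  | matchPair {V W M} : Step (.matchPair (.pair V W) M) (substC (sub2 V W) M)
  | matchInl {V M N} : Step (.matchSum (.inl V) M N) (substC (sub1 V) M)
  | matchInr {W M N} : Step (.matchSum (.inr W) M N) (substC (sub1 W) N)
  -- algebraicity of signals, interrupt handlers, awaiting, and process creation
  | letSig {op V M N} : Step (.letin (.sig op V M) N) (.sig op V (.letin M N))
  | letHandler {op M V N₁ N₂} :
      Step (.letin (.handler op M V N₁) N₂)
           (.handler op M V (.letin N₁ (renameC (liftR Nat.succ) N₂)))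
  | letAwait {V M N} :
      Step (.letin (.await V M) N)
           (.await V (.letin M (renameC (liftR Nat.succ) N)))
  | letSpawn {M N₁ N₂} : Step (.letin (.spawn M N₁) N₂) (.spawn M (.letin N₁ N₂))
  -- commutativity of signals and process creation with interrupt handlers
  | handlerSig {op M V op' W N} :
      Step (.handler op M V (.sig op' (renameV Nat.succ W) N))
           (.sig op' W (.handler op M V N))
  | handlerSpawn {op M V N₁ N₂} :
      Step (.handler op M V (.spawn (renameC Nat.succ N₁) N₂))
           (.spawn N₁ (.handler op M V N₂))
  -- interrupt propagation
  | intRet {op V W} : Step (.int op V (.ret W)) (.ret W)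
  | intSig {op V op' W M} :
      Step (.int op V (.sig op' W M)) (.sig op' W (.int op V M))
  | intHandler {op V M W N} :
      Step (.int op V (.handler op M W N))
           (.letin (substC (sub3 V (reinstall op M) W) M)
                   (.int op (renameV Nat.succ V) N))
  | intHandlerNeq {op op' V M W N} :
      op ≠ op' →
      Step (.int op' V (.handler op M W N))
           (.handler op M W (.int op' (renameV Nat.succ V) N))
  | intAwait {op V W M} :
      Step (.int op V (.await W M)) (.await W (.int op (renameV Nat.succ V) M))
  | intSpawn {op V M N} : Step (.int op V (.spawn M N)) (.spawn M (.int op V N))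
  -- awaiting a fulfilled promise, and unboxing
  | awaitProm {V M} : Step (.await (.prom V) M) (substC (sub1 V) M)
  | unboxBox {V M} : Step (.unbox (.box V) M) (substC (sub1 V) M)
  -- evaluation contexts
  | ctxLet {M M' N} : Step M M' → Step (.letin M N) (.letin M' N)
  | ctxSig {op V M M'} : Step M M' → Step (.sig op V M) (.sig op V M')
  | ctxInt {op V M M'} : Step M M' → Step (.int op V M) (.int op V M')
  | ctxHandler {op M V N N'} :
      Step N N' → Step (.handler op M V N) (.handler op M V N')
  | ctxSpawn {M N N'} : Step N N' → Step (.spawn M N) (.spawn M N')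

/-- Result forms `RunRes⟨Ψ | M⟩` of computations running inside a process;
`Ψ` is the set of (de Bruijn indices of) promise variables bound by
enveloping interrupt handlers. -/
inductive RunRes {Op : Type} : Set ℕ → Comp Op → Prop where
  | ret {Ψ V} : RunRes Ψ (.ret V)
  | await {Ψ : Set ℕ} {p M} : p ∈ Ψ → RunRes Ψ (.await (.var p) M)
  | handler {Ψ : Set ℕ} {op M V N} :
      RunRes (insert 0 {n | ∃ m ∈ Ψ, n = m + 1}) N →
      RunRes Ψ (.handler op M V N)

/-- Result forms `CompRes⟨Ψ | M⟩` of computations. -/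
inductive CompRes {Op : Type} : Set ℕ → Comp Op → Prop where
  | run {Ψ M} : RunRes Ψ M → CompRes Ψ M
  | sig {Ψ op V M} : CompRes Ψ M → CompRes Ψ (.sig op V M)
  | spawn {Ψ M N} : CompRes Ψ N → CompRes Ψ (.spawn M N)

/-- Value types of the λ_æ calculus. -/
inductive VTy (Op : Type) : Type where
  | base : VTy Op
  | unit : VTy Op
  | empty : VTy Op
  | prod : VTy Op → VTy Op → VTy Op
  | sum : VTy Op → VTy Op → VTy Op
  | fn : VTy Op → VTy Op → Set Op → IAnn Op → VTy Op  -- X → Y!(o,ι)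
  | prom : VTy Op → VTy Op                            -- ⟨X⟩
  | box : VTy Op → VTy Op                             -- [X]

/-- Mobile types: ground types extended with the modal box type. -/
inductive Mobile {Op : Type} : VTy Op → Prop where
  | base : Mobile .base
  | unit : Mobile .unit
  | empty : Mobile .empty
  | prod {A B} : Mobile A → Mobile B → Mobile (.prod A B)
  | sum {A B} : Mobile A → Mobile B → Mobile (.sum A B)
  | box {X} : Mobile (.box X)

/-- Typing context entries: variable bindings and Fitch-style locks. -/
inductive CtxE (Op : Type) : Type where
  | tyvar : VTy Op → CtxE Op
  | lock : CtxE Op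

/-- Typing contexts (most recent entry first). -/
abbrev Ctx (Op : Type) := List (CtxE Op)

/-- `Lookup Γ n X b`: the de Bruijn variable `n` has type `X` in `Γ`, and
`b` records whether a lock `🔒` occurs between the binding and the use. -/
inductive Lookup {Op : Type} : Ctx Op → ℕ → VTy Op → Bool → Prop where
  | here {Γ X} : Lookup (CtxE.tyvar X :: Γ) 0 X false
  | thereVar {Γ n X Y b} : Lookup Γ n X b → Lookup (CtxE.tyvar Y :: Γ) (n + 1) X b
  | thereLock {Γ n X b} : Lookup Γ n X b → Lookup (CtxE.lock :: Γ) n X true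

mutual
/-- Value typing `Γ ⊢ V : X` of the λ_æ calculus, relative to a signature
`sg` assigning payload types to signal/interrupt names. -/
inductive HasV {Op : Type} [DecidableEq Op] (sg : Op → VTy Op) :
    Ctx Op → Val Op → VTy Op → Prop where
  | var {Γ n X b} : Lookup Γ n X b → (b = true → Mobile X) →
      HasV sg Γ (.var n) X
  | unit {Γ} : HasV sg Γ .unit .unit
  | pair {Γ V W X Y} : HasV sg Γ V X → HasV sg Γ W Y →
      HasV sg Γ (.pair V W) (.prod X Y)
  | inl {Γ V X Y} : HasV sg Γ V X → HasV sg Γ (.inl V) (.sum X Y)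
  | inr {Γ W X Y} : HasV sg Γ W Y → HasV sg Γ (.inr W) (.sum X Y)
  | lam {Γ M X Y o ι} : HasC sg (CtxE.tyvar X :: Γ) M Y o ι →
      HasV sg Γ (.lam M) (.fn X Y o ι)
  | prom {Γ V X} : HasV sg Γ V X → HasV sg Γ (.prom V) (.prom X)
  | box {Γ V X} : HasV sg (CtxE.lock :: Γ) V X → HasV sg Γ (.box V) (.box X)

/-- Computation typing `Γ ⊢ M : X!(o,ι)` of the λ_æ calculus. -/
inductive HasC {Op : Type} [DecidableEq Op] (sg : Op → VTy Op) :
    Ctx Op → Comp Op → VTy Op → Set Op → IAnn Op → Prop where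
  | ret {Γ V X o ι} : HasV sg Γ V X → HasC sg Γ (.ret V) X o ι
  | letin {Γ M N X Y o ι} : HasC sg Γ M X o ι →
      HasC sg (CtxE.tyvar X :: Γ) N Y o ι → HasC sg Γ (.letin M N) Y o ι
  | app {Γ V W X Y o ι} : HasV sg Γ V (.fn X Y o ι) → HasV sg Γ W X →
      HasC sg Γ (.app V W) Y o ι
  | matchPair {Γ V M X Y Z o ι} : HasV sg Γ V (.prod X Y) →
      HasC sg (CtxE.tyvar Y :: CtxE.tyvar X :: Γ) M Z o ι →
      HasC sg Γ (.matchPair V M) Z o ι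
  | matchEmpty {Γ V Z o ι} : HasV sg Γ V .empty →
      HasC sg Γ (.matchEmpty V) Z o ι
  | matchSum {Γ V M N X Y Z o ι} : HasV sg Γ V (.sum X Y) →
      HasC sg (CtxE.tyvar X :: Γ) M Z o ι →
      HasC sg (CtxE.tyvar Y :: Γ) N Z o ι →
      HasC sg Γ (.matchSum V M N) Z o ι
  | sig {Γ op V M X o ι} : op ∈ o → HasV sg Γ V (sg op) →
      HasC sg Γ M X o ι → HasC sg Γ (.sig op V M) X o ι
  | int {Γ op V M X o ι} : HasV sg Γ V (sg op) → HasC sg Γ M X o ι →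
      HasC sg Γ (.int op V M) X (IAnn.act op (o, ι)).1 (IAnn.act op (o, ι)).2
  | handler {Γ op M V N S X Y o ι o' ι' o''} :
      ι.val [op] = some o'' → o' ⊆ o'' → IAnn.le ι' (ι.subtree op) →
      HasC sg (CtxE.tyvar S ::
               CtxE.tyvar (.fn S (.prom X) (∅ : Set Op) (IAnn.single op o' ι')) ::
               CtxE.tyvar (sg op) :: Γ) M (.prom X) o' ι' →
      HasV sg Γ V S →
      HasC sg (CtxE.tyvar (.prom X) :: Γ) N Y o ι →
      HasC sg Γ (.handler op M V N) Y o ι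
  | await {Γ V M X Y o ι} : HasV sg Γ V (.prom X) →
      HasC sg (CtxE.tyvar X :: Γ) M Y o ι → HasC sg Γ (.await V M) Y o ι
  | unbox {Γ V M X Y o ι} : HasV sg Γ V (.box X) →
      HasC sg (CtxE.tyvar X :: Γ) M Y o ι → HasC sg Γ (.unbox V M) Y o ι
  | spawn {Γ M N X Y o ι o' ι'} : HasC sg (CtxE.lock :: Γ) M X o ι →
      HasC sg Γ N Y o' ι' → HasC sg Γ (.spawn M N) Y o' ι'
  | subsume {Γ M X o ι o' ι'} : HasC sg Γ M X o ι → o ⊆ o' → IAnn.le ι ι' →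
      HasC sg Γ M X o' ι'
end

section Aux

namespace IAnn

variable {Op : Type}

theorem le_refl (ι : IAnn Op) : le ι ι := fun _ a ha => ⟨a, ha, fun _ h => h⟩

theorem le_trans {a b c : IAnn Op} (h1 : le a b) (h2 : le b c) : le a c := by
  intro l x hx
  obtain ⟨y, hy, hxy⟩ := h1 l x hx
  obtain ⟨z, hz, hyz⟩ := h2 l y hy
  exact ⟨z, hz, fun t ht => hyz (hxy ht)⟩

theorem ojoin_left {x : Set Op} (y : Option (Set Op)) :
    ∃ z, ojoin (some x) y = some z ∧ x ⊆ z := by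
  cases y with
  | none => exact ⟨x, rfl, subset_rfl⟩
  | some y => exact ⟨x ∪ y, rfl, Set.subset_union_left⟩

theorem ojoin_right {y : Set Op} (x : Option (Set Op)) :
    ∃ z, ojoin x (some y) = some z ∧ y ⊆ z := by
  cases x with
  | none => exact ⟨y, rfl, subset_rfl⟩
  | some x => exact ⟨x ∪ y, rfl, Set.subset_union_right⟩

theorem le_join_left (a b : IAnn Op) : le a (join a b) := by
  intro l x hx
  show ∃ z, ojoin (a.val l) (b.val l) = some z ∧ x ⊆ z
  rw [hx]; exact ojoin_left _

theorem le_join_right (a b : IAnn Op) : le b (join a b) := by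
  intro l x hx
  show ∃ z, ojoin (a.val l) (b.val l) = some z ∧ x ⊆ z
  rw [hx]; exact ojoin_right _

theorem join_mono {a a' b b' : IAnn Op} (ha : le a a') (hb : le b b') :
    le (join a b) (join a' b') := by
  intro l x hx
  show ∃ z, ojoin (a'.val l) (b'.val l) = some z ∧ x ⊆ z
  have hx' : ojoin (a.val l) (b.val l) = some x := hx
  cases hva : a.val l with
  | some xa =>
    obtain ⟨ya, hya, hsa⟩ := ha l xa hva
    rw [hya]
    cases hvb : b.val l with
    | some xb =>
      obtain ⟨yb, hyb, hsb⟩ := hb l xb hvb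
      rw [hyb]
      rw [hva, hvb] at hx'
      cases hx'
      exact ⟨ya ∪ yb, rfl, Set.union_subset_union hsa hsb⟩
    | none =>
      rw [hva, hvb] at hx'
      cases hx'
      obtain ⟨z, hz, hsz⟩ := ojoin_left (Op := Op) (x := ya) ((b' : IAnn Op).val l)
      exact ⟨z, hz, hsa.trans hsz⟩
  | none =>
    rw [hva] at hx'
    simp only [ojoin] at hx'
    obtain ⟨yb, hyb, hsb⟩ := hb l x hx'
    rw [hyb]
    obtain ⟨z, hz, hsz⟩ := ojoin_right (Op := Op) (y := yb) ((a' : IAnn Op).val l)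
    exact ⟨z, hz, hsb.trans hsz⟩

theorem subtree_mono {a b : IAnn Op} (op : Op) (h : le a b) :
    le (subtree a op) (subtree b op) := by
  intro l x hx
  match l with
  | [] => exact absurd hx (by simp [subtree])
  | y :: t => exact h _ _ hx

variable [DecidableEq Op]

theorem update_mono {a b : IAnn Op} (op : Op) (h : le a b) :
    le (update a op) (update b op) := by
  intro l x hx
  match l with
  | [] => exact absurd hx (by simp [update])
  | y :: t =>
    by_cases hy : y = op
    · exact absurd hx (by simp [update, hy])
    · have hx' : a.val (y :: t) = some x := by simpa [update, hy] using hx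
      obtain ⟨z, hz, hsz⟩ := h _ _ hx'
      exact ⟨z, by simpa [update, hy] using hz, hsz⟩

theorem act_eq_some {op : Op} {p : Set Op × IAnn Op} {a} (h : p.2.val [op] = some a) :
    act op p = (p.1 ∪ a, join (update p.2 op) (subtree p.2 op)) := by
  unfold act; rw [h]

theorem act_eq_none {op : Op} {p : Set Op × IAnn Op} (h : p.2.val [op] = none) :
    act op p = p := by
  unfold act; rw [h]

theorem act_fst (op : Op) (p : Set Op × IAnn Op) : p.1 ⊆ (act op p).1 := by
  cases hv : p.2.val [op] with
  | some a => rw [act_eq_some hv]; exact Set.subset_union_left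
  | none => rw [act_eq_none hv]

/-- a tree undefined at `[op]` is undefined on all paths starting with `op`. -/
theorem none_of_head {ι : IAnn Op} {op : Op} (h : ι.val [op] = none) :
    ∀ t, ι.val (op :: t) = none := by
  intro t
  match t with
  | [] => exact h
  | y :: u =>
    cases hv : ι.val (op :: y :: u) with
    | none => rfl
    | some a =>
      have := ι.prefix_closed [op] (y :: u) (by simp) (by simp [hv])
      rw [h] at this; simp at this

theorem act_mono (op : Op) {p q : Set Op × IAnn Op}
    (h1 : p.1 ⊆ q.1) (h2 : le p.2 q.2) :
    (act op p).1 ⊆ (act op q).1 ∧ le (act op p).2 (act op q).2 := by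
  cases hp : p.2.val [op] with
  | some a =>
    obtain ⟨b, hq, hab⟩ := h2 _ _ hp
    rw [act_eq_some hp, act_eq_some hq]
    exact ⟨Set.union_subset_union h1 hab, join_mono (update_mono op h2) (subtree_mono op h2)⟩
  | none =>
    rw [act_eq_none hp]
    cases hq : q.2.val [op] with
    | none => rw [act_eq_none hq]; exact ⟨h1, h2⟩
    | some b =>
      rw [act_eq_some hq]
      refine ⟨h1.trans Set.subset_union_left, ?_⟩
      intro l x hx
      match l with
      | [] => exact absurd hx (by simp [p.2.nil_none] at hx ⊢)
      | y :: t =>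
        by_cases hy : y = op
        · subst hy
          rw [none_of_head hp] at hx; cases hx
        · obtain ⟨z, hz, hsz⟩ := h2 _ _ hx
          have hz' : (update q.2 op).val (y :: t) = some z := by simpa [update, hy] using hz
          show ∃ w, ojoin ((update q.2 op).val (y :: t)) ((subtree q.2 op).val (y :: t)) = some w ∧ x ⊆ w
          rw [hz']
          obtain ⟨w, hw, hsw⟩ := ojoin_left (Op := Op) (x := z) ((subtree q.2 op).val (y :: t))
          exact ⟨w, hw, hsz.trans hsw⟩

theorem act_val_other {op op' : Op} (hne : op ≠ op') (p : Set Op × IAnn Op) {a}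
    (h : p.2.val [op] = some a) :
    ∃ b, (act op' p).2.val [op] = some b ∧ a ⊆ b := by
  cases hq : p.2.val [op'] with
  | none => rw [act_eq_none hq]; exact ⟨a, h, subset_rfl⟩
  | some x =>
    rw [act_eq_some hq]
    have hu : (update p.2 op').val [op] = some a := by simpa [update, hne] using h
    show ∃ b, ojoin ((update p.2 op').val [op]) ((subtree p.2 op').val [op]) = some b ∧ a ⊆ b
    rw [hu]
    exact ojoin_left _

theorem act_subtree_other {op op' : Op} (hne : op ≠ op') (p : Set Op × IAnn Op) :
    le (p.2.subtree op) ((act op' p).2.subtree op) := by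
  cases hq : p.2.val [op'] with
  | none => rw [act_eq_none hq]; exact le_refl _
  | some x =>
    rw [act_eq_some hq]
    intro l a ha
    match l with
    | [] => exact absurd ha (by simp [subtree])
    | y :: t =>
      have ha' : p.2.val (op :: y :: t) = some a := ha
      have hu : (update p.2 op').val (op :: y :: t) = some a := by
        simpa [update, hne] using ha'
      show ∃ w, ojoin ((update p.2 op').val (op :: y :: t))
          ((subtree p.2 op').val (op :: y :: t)) = some w ∧ a ⊆ w
      rw [hu]
      exact ojoin_left _

theorem single_val {op : Op} {o' : Set Op} {ι' : IAnn Op} :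
    (single op o' ι').val [op] = some o' := by simp [single]

theorem le_single_subtree {op : Op} {o' : Set Op} {ι' : IAnn Op} :
    le ι' ((single op o' ι').subtree op) := by
  intro l a ha
  match l with
  | [] => exact absurd ha (by simp [ι'.nil_none] at ha ⊢)
  | y :: t =>
    refine ⟨a, ?_, subset_rfl⟩
    show (single op o' ι').val (op :: y :: t) = some a
    simpa [single] using ha

end IAnn

end Aux
set_option linter.unusedSectionVars false

section Ren

variable {Op : Type}

/-- Forward renaming relation between contexts. -/
def Ren (ρ : ℕ → ℕ) (Γ Δ : Ctx Op) : Prop :=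
  ∀ n X b, Lookup Γ n X b → ∃ b', Lookup Δ (ρ n) X b' ∧ (b' = true → b = true)

theorem Ren.lift {ρ : ℕ → ℕ} {Γ Δ : Ctx Op} (h : Ren ρ Γ Δ) (Z : VTy Op) :
    Ren (liftR ρ) (CtxE.tyvar Z :: Γ) (CtxE.tyvar Z :: Δ) := by
  intro n X b hl
  cases hl with
  | here => exact ⟨false, .here, fun h => h⟩
  | thereVar hl =>
    obtain ⟨b', h1, h2⟩ := h _ _ _ hl
    exact ⟨b', .thereVar h1, h2⟩

theorem Ren.lock {ρ : ℕ → ℕ} {Γ Δ : Ctx Op} (h : Ren ρ Γ Δ) :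
    Ren ρ (CtxE.lock :: Γ) (CtxE.lock :: Δ) := by
  intro n X b hl
  cases hl with
  | thereLock hl =>
    obtain ⟨b', h1, _⟩ := h _ _ _ hl
    exact ⟨true, .thereLock h1, fun _ => rfl⟩

theorem Ren.succ {Γ : Ctx Op} (Z : VTy Op) : Ren Nat.succ Γ (CtxE.tyvar Z :: Γ) :=
  fun _ _ b hl => ⟨b, .thereVar hl, fun h => h⟩

theorem Ren.unlock {Γ : Ctx Op} : Ren id (CtxE.lock :: Γ) Γ := by
  intro n X b hl
  cases hl with
  | thereLock hl => exact ⟨_, hl, fun _ => rfl⟩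

/-- Inverse renaming relation between contexts. -/
def InvRen (ρ : ℕ → ℕ) (Γ Δ : Ctx Op) : Prop :=
  ∀ n X b, Lookup Δ (ρ n) X b → ∃ b', Lookup Γ n X b' ∧ (b' = true → b = true)

theorem InvRen.lift {ρ : ℕ → ℕ} {Γ Δ : Ctx Op} (h : InvRen ρ Γ Δ) (Z : VTy Op) :
    InvRen (liftR ρ) (CtxE.tyvar Z :: Γ) (CtxE.tyvar Z :: Δ) := by
  intro n X b hl
  match n with
  | 0 =>
    cases hl with
    | here => exact ⟨false, .here, fun h => h⟩
  | n + 1 =>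
    cases hl with
    | thereVar hl =>
      obtain ⟨b', h1, h2⟩ := h _ _ _ hl
      exact ⟨b', .thereVar h1, h2⟩

theorem InvRen.lock {ρ : ℕ → ℕ} {Γ Δ : Ctx Op} (h : InvRen ρ Γ Δ) :
    InvRen ρ (CtxE.lock :: Γ) (CtxE.lock :: Δ) := by
  intro n X b hl
  cases hl with
  | thereLock hl =>
    obtain ⟨b', h1, _⟩ := h _ _ _ hl
    exact ⟨true, .thereLock h1, fun _ => rfl⟩

theorem InvRen.succ {Γ : Ctx Op} (Z : VTy Op) : InvRen Nat.succ Γ (CtxE.tyvar Z :: Γ) := by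
  intro n X b hl
  cases hl with
  | thereVar hl => exact ⟨b, hl, fun h => h⟩

theorem liftR_id : liftR id = id := by
  funext n; cases n <;> rfl

mutual
theorem renameV_id (V : Val Op) : renameV id V = V := by
  cases V with
  | var n => rfl
  | unit => rfl
  | pair a b => simp [renameV, renameV_id a, renameV_id b]
  | inl a => simp [renameV, renameV_id a]
  | inr a => simp [renameV, renameV_id a]
  | lam m => simp [renameV, liftR_id, renameC_id m]
  | prom a => simp [renameV, renameV_id a]
  | box a => simp [renameV, renameV_id a]

theorem renameC_id (M : Comp Op) : renameC id M = M := by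
  cases M with
  | ret v => simp [renameC, renameV_id v]
  | letin m n => simp [renameC, liftR_id, renameC_id m, renameC_id n]
  | app v w => simp [renameC, renameV_id v, renameV_id w]
  | matchPair v m => simp [renameC, liftR_id, renameV_id v, renameC_id m]
  | matchEmpty v => simp [renameC, renameV_id v]
  | matchSum v m n => simp [renameC, liftR_id, renameV_id v, renameC_id m, renameC_id n]
  | sig op v m => simp [renameC, renameV_id v, renameC_id m]
  | int op v m => simp [renameC, renameV_id v, renameC_id m]
  | handler op m v n =>
      simp [renameC, liftR_id, renameC_id m, renameV_id v, renameC_id n]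
  | await v m => simp [renameC, liftR_id, renameV_id v, renameC_id m]
  | unbox v m => simp [renameC, liftR_id, renameV_id v, renameC_id m]
  | spawn m n => simp [renameC, renameC_id m, renameC_id n]
end

end Ren
section Inversion

variable {Op : Type} [DecidableEq Op] {sg : Op → VTy Op}

/-- Flattened inversion information for computation typing. -/
def CInv (sg : Op → VTy Op) (Γ : Ctx Op) : Comp Op → VTy Op → Set Op → IAnn Op → Prop
  | .ret V, X, _, _ => HasV sg Γ V X
  | .letin M N, Y, o, ι => ∃ X, HasC sg Γ M X o ι ∧ HasC sg (CtxE.tyvar X :: Γ) N Y o ι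
  | .app V W, Y, o, ι =>
      ∃ X o₀ ι₀, HasV sg Γ V (.fn X Y o₀ ι₀) ∧ HasV sg Γ W X ∧ o₀ ⊆ o ∧ IAnn.le ι₀ ι
  | .matchPair V M, Z, o, ι =>
      ∃ X Y, HasV sg Γ V (.prod X Y) ∧ HasC sg (CtxE.tyvar Y :: CtxE.tyvar X :: Γ) M Z o ι
  | .matchEmpty V, _, _, _ => HasV sg Γ V .empty
  | .matchSum V M N, Z, o, ι =>
      ∃ X Y, HasV sg Γ V (.sum X Y) ∧ HasC sg (CtxE.tyvar X :: Γ) M Z o ι ∧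
        HasC sg (CtxE.tyvar Y :: Γ) N Z o ι
  | .sig op V M, X, o, ι => op ∈ o ∧ HasV sg Γ V (sg op) ∧ HasC sg Γ M X o ι
  | .int op V M, X, o, ι =>
      ∃ o₀ ι₀, HasV sg Γ V (sg op) ∧ HasC sg Γ M X o₀ ι₀ ∧
        (IAnn.act op (o₀, ι₀)).1 ⊆ o ∧ IAnn.le (IAnn.act op (o₀, ι₀)).2 ι
  | .handler op M V N, Y, o, ι =>
      ∃ S X o' ι' o'', ι.val [op] = some o'' ∧ o' ⊆ o'' ∧ IAnn.le ι' (ι.subtree op) ∧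
        HasC sg (CtxE.tyvar S ::
          CtxE.tyvar (.fn S (.prom X) (∅ : Set Op) (IAnn.single op o' ι')) ::
          CtxE.tyvar (sg op) :: Γ) M (.prom X) o' ι' ∧
        HasV sg Γ V S ∧ HasC sg (CtxE.tyvar (.prom X) :: Γ) N Y o ι
  | .await V M, Y, o, ι => ∃ X, HasV sg Γ V (.prom X) ∧ HasC sg (CtxE.tyvar X :: Γ) M Y o ι
  | .unbox V M, Y, o, ι => ∃ X, HasV sg Γ V (.box X) ∧ HasC sg (CtxE.tyvar X :: Γ) M Y o ι
  | .spawn M N, Y, o, ι =>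
      (∃ X o₀ ι₀, HasC sg (CtxE.lock :: Γ) M X o₀ ι₀) ∧ HasC sg Γ N Y o ι

theorem CInv.mono {Γ : Ctx Op} {M X o ι o' ι'} (h : CInv sg Γ M X o ι)
    (ho : o ⊆ o') (hι : IAnn.le ι ι') : CInv sg Γ M X o' ι' := by
  cases M with
  | ret V => exact h
  | letin M N =>
    obtain ⟨Z, h1, h2⟩ := h
    exact ⟨Z, h1.subsume ho hι, h2.subsume ho hι⟩
  | app V W =>
    obtain ⟨Z, o₀, ι₀, h1, h2, h3, h4⟩ := h
    exact ⟨Z, o₀, ι₀, h1, h2, h3.trans ho, IAnn.le_trans h4 hι⟩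
  | matchPair V M =>
    obtain ⟨A, B, h1, h2⟩ := h
    exact ⟨A, B, h1, h2.subsume ho hι⟩
  | matchEmpty V => exact h
  | matchSum V M N =>
    obtain ⟨A, B, h1, h2, h3⟩ := h
    exact ⟨A, B, h1, h2.subsume ho hι, h3.subsume ho hι⟩
  | sig op V M =>
    obtain ⟨h1, h2, h3⟩ := h
    exact ⟨ho h1, h2, h3.subsume ho hι⟩
  | int op V M =>
    obtain ⟨o₀, ι₀, h1, h2, h3, h4⟩ := h
    exact ⟨o₀, ι₀, h1, h2, h3.trans ho, IAnn.le_trans h4 hι⟩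
  | handler op M V N =>
    obtain ⟨S, A, oh, ιh, o'', c1, c2, c3, hM, hV, hN⟩ := h
    obtain ⟨o₂, hv2, hsub⟩ := hι _ _ c1
    exact ⟨S, A, oh, ιh, o₂, hv2, c2.trans hsub,
      IAnn.le_trans c3 (IAnn.subtree_mono _ hι), hM, hV, hN.subsume ho hι⟩
  | await V M =>
    obtain ⟨A, h1, h2⟩ := h
    exact ⟨A, h1, h2.subsume ho hι⟩
  | unbox V M =>
    obtain ⟨A, h1, h2⟩ := h
    exact ⟨A, h1, h2.subsume ho hι⟩
  | spawn M N =>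
    obtain ⟨h1, h2⟩ := h
    exact ⟨h1, h2.subsume ho hι⟩

theorem hasC_inv {Γ : Ctx Op} {M X o ι} (h : HasC sg Γ M X o ι) : CInv sg Γ M X o ι := by
  refine @HasC.rec Op _ sg (fun _ _ _ _ => True)
    (fun Γ M X o ι _ => CInv sg Γ M X o ι)
    ?_ ?_ ?_ ?_ ?_ ?_ ?_ ?_ ?_ ?_ ?_ ?_ ?_ ?_ ?_ ?_ ?_ ?_ ?_ ?_ ?_ Γ M X o ι h
  · intros; trivial
  · intros; trivial
  · intros; trivial
  · intros; trivial
  · intros; trivial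
  · intros; trivial
  · intros; trivial
  · intros; trivial
  · -- ret
    intro Γ V X o ι hV _
    exact hV
  · -- letin
    intro Γ M N X Y o ι hM hN _ _
    exact ⟨X, hM, hN⟩
  · -- app
    intro Γ V W X Y o ι hV hW _ _
    exact ⟨X, o, ι, hV, hW, subset_rfl, IAnn.le_refl ι⟩
  · -- matchPair
    intro Γ V M X Y Z o ι hV hM _ _
    exact ⟨X, Y, hV, hM⟩
  · -- matchEmpty
    intro Γ V Z o ι hV _
    exact hV
  · -- matchSum
    intro Γ V M N X Y Z o ι hV hM hN _ _ _
    exact ⟨X, Y, hV, hM, hN⟩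
  · -- sig
    intro Γ op V M X o ι hop hV hM _ _
    exact ⟨hop, hV, hM⟩
  · -- int
    intro Γ op V M X o ι hV hM _ _
    exact ⟨o, ι, hV, hM, subset_rfl, IAnn.le_refl _⟩
  · -- handler
    intro Γ op M V N S X Y o ι o' ι' o'' c1 c2 c3 hM hV hN _ _ _
    exact ⟨S, X, o', ι', o'', c1, c2, c3, hM, hV, hN⟩
  · -- await
    intro Γ V M X Y o ι hV hM _ _
    exact ⟨X, hV, hM⟩
  · -- unbox
    intro Γ V M X Y o ι hV hM _ _
    exact ⟨X, hV, hM⟩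
  · -- spawn
    intro Γ M N X Y o ι o' ι' hM hN _ _
    exact ⟨⟨X, o, ι, hM⟩, hN⟩
  · -- subsume
    intro Γ M X o ι o' ι' _ ho hι ih
    exact ih.mono ho hι

theorem inv_ret {Γ : Ctx Op} {V X o ι} (h : HasC sg Γ (.ret V) X o ι) :
    HasV sg Γ V X := hasC_inv h

theorem inv_letin {Γ : Ctx Op} {M N Y o ι} (h : HasC sg Γ (.letin M N) Y o ι) :
    ∃ X, HasC sg Γ M X o ι ∧ HasC sg (CtxE.tyvar X :: Γ) N Y o ι := hasC_inv h

theorem inv_app {Γ : Ctx Op} {V W Y o ι} (h : HasC sg Γ (.app V W) Y o ι) :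
    ∃ X o₀ ι₀, HasV sg Γ V (.fn X Y o₀ ι₀) ∧ HasV sg Γ W X ∧ o₀ ⊆ o ∧ IAnn.le ι₀ ι :=
  hasC_inv h

theorem inv_matchPair {Γ : Ctx Op} {V M Z o ι} (h : HasC sg Γ (.matchPair V M) Z o ι) :
    ∃ X Y, HasV sg Γ V (.prod X Y) ∧ HasC sg (CtxE.tyvar Y :: CtxE.tyvar X :: Γ) M Z o ι :=
  hasC_inv h

theorem inv_matchEmpty {Γ : Ctx Op} {V Z o ι} (h : HasC sg Γ (.matchEmpty V) Z o ι) :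
    HasV sg Γ V .empty := hasC_inv h

theorem inv_matchSum {Γ : Ctx Op} {V M N Z o ι} (h : HasC sg Γ (.matchSum V M N) Z o ι) :
    ∃ X Y, HasV sg Γ V (.sum X Y) ∧ HasC sg (CtxE.tyvar X :: Γ) M Z o ι ∧
      HasC sg (CtxE.tyvar Y :: Γ) N Z o ι := hasC_inv h

theorem inv_sig {Γ : Ctx Op} {op V M X o ι} (h : HasC sg Γ (.sig op V M) X o ι) :
    op ∈ o ∧ HasV sg Γ V (sg op) ∧ HasC sg Γ M X o ι := hasC_inv h

theorem inv_int {Γ : Ctx Op} {op V M X o ι} (h : HasC sg Γ (.int op V M) X o ι) :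
    ∃ o₀ ι₀, HasV sg Γ V (sg op) ∧ HasC sg Γ M X o₀ ι₀ ∧
      (IAnn.act op (o₀, ι₀)).1 ⊆ o ∧ IAnn.le (IAnn.act op (o₀, ι₀)).2 ι := hasC_inv h

theorem inv_handler {Γ : Ctx Op} {op M V N Y o ι} (h : HasC sg Γ (.handler op M V N) Y o ι) :
    ∃ S X o' ι' o'', ι.val [op] = some o'' ∧ o' ⊆ o'' ∧ IAnn.le ι' (ι.subtree op) ∧
      HasC sg (CtxE.tyvar S ::
        CtxE.tyvar (.fn S (.prom X) (∅ : Set Op) (IAnn.single op o' ι')) ::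
        CtxE.tyvar (sg op) :: Γ) M (.prom X) o' ι' ∧
      HasV sg Γ V S ∧ HasC sg (CtxE.tyvar (.prom X) :: Γ) N Y o ι := hasC_inv h

theorem inv_await {Γ : Ctx Op} {V M Y o ι} (h : HasC sg Γ (.await V M) Y o ι) :
    ∃ X, HasV sg Γ V (.prom X) ∧ HasC sg (CtxE.tyvar X :: Γ) M Y o ι := hasC_inv h

theorem inv_unbox {Γ : Ctx Op} {V M Y o ι} (h : HasC sg Γ (.unbox V M) Y o ι) :
    ∃ X, HasV sg Γ V (.box X) ∧ HasC sg (CtxE.tyvar X :: Γ) M Y o ι := hasC_inv h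

theorem inv_spawn {Γ : Ctx Op} {M N Y o ι} (h : HasC sg Γ (.spawn M N) Y o ι) :
    (∃ X o₀ ι₀, HasC sg (CtxE.lock :: Γ) M X o₀ ι₀) ∧ HasC sg Γ N Y o ι := hasC_inv h

end Inversion
section RenPres

variable {Op : Type} [DecidableEq Op] {sg : Op → VTy Op}

mutual
theorem renV_pres (V : Val Op) {Γ X} (h : HasV sg Γ V X) {ρ Δ} (hρ : Ren ρ Γ Δ) :
    HasV sg Δ (renameV ρ V) X :=
  match V, h with
  | .var _, .var hl hm =>
    let ⟨_, h1, h2⟩ := hρ _ _ _ hl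
    .var h1 (fun hb => hm (h2 hb))
  | .unit, .unit => .unit
  | .pair a b, .pair ha hb => .pair (renV_pres a ha hρ) (renV_pres b hb hρ)
  | .inl a, .inl ha => .inl (renV_pres a ha hρ)
  | .inr a, .inr ha => .inr (renV_pres a ha hρ)
  | .lam m, .lam hm => .lam (renC_pres m hm (hρ.lift _))
  | .prom a, .prom ha => .prom (renV_pres a ha hρ)
  | .box a, .box ha => .box (renV_pres a ha hρ.lock)

theorem renC_pres (M : Comp Op) {Γ X o ι} (h : HasC sg Γ M X o ι) {ρ Δ} (hρ : Ren ρ Γ Δ) :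
    HasC sg Δ (renameC ρ M) X o ι :=
  match M with
  | .ret v => .ret (renV_pres v (inv_ret h) hρ)
  | .letin m n =>
    let ⟨Z, h1, h2⟩ := inv_letin h
    .letin (renC_pres m h1 hρ) (renC_pres n h2 (hρ.lift Z))
  | .app v w =>
    let ⟨A, o₀, ι₀, hv, hw, ho, hι⟩ := inv_app h
    .subsume (.app (renV_pres v hv hρ) (renV_pres w hw hρ)) ho hι
  | .matchPair v m =>
    let ⟨A, B, hv, hm⟩ := inv_matchPair h
    .matchPair (renV_pres v hv hρ) (renC_pres m hm ((hρ.lift A).lift B))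
  | .matchEmpty v => .matchEmpty (renV_pres v (inv_matchEmpty h) hρ)
  | .matchSum v m n =>
    let ⟨A, B, hv, hm, hn⟩ := inv_matchSum h
    .matchSum (renV_pres v hv hρ) (renC_pres m hm (hρ.lift A)) (renC_pres n hn (hρ.lift B))
  | .sig op v m =>
    let ⟨ho, hv, hm⟩ := inv_sig h
    .sig ho (renV_pres v hv hρ) (renC_pres m hm hρ)
  | .int op v m =>
    let ⟨o₀, ι₀, hv, hm, h1, h2⟩ := inv_int h
    .subsume (.int (renV_pres v hv hρ) (renC_pres m hm hρ)) h1 h2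
  | .handler op m v n =>
    let ⟨S, A, o', ι', o'', c1, c2, c3, hm, hv, hn⟩ := inv_handler h
    .handler c1 c2 c3 (renC_pres m hm (((hρ.lift _).lift _).lift _))
      (renV_pres v hv hρ) (renC_pres n hn (hρ.lift _))
  | .await v m =>
    let ⟨A, hv, hm⟩ := inv_await h
    .await (renV_pres v hv hρ) (renC_pres m hm (hρ.lift A))
  | .unbox v m =>
    let ⟨A, hv, hm⟩ := inv_unbox h
    .unbox (renV_pres v hv hρ) (renC_pres m hm (hρ.lift A))
  | .spawn m n =>
    let ⟨⟨A, o₀, ι₀, hm⟩, hn⟩ := inv_spawn h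
    .spawn (renC_pres m hm hρ.lock) (renC_pres n hn hρ)
end

mutual
theorem unrenV_pres (V : Val Op) {Δ X ρ} (h : HasV sg Δ (renameV ρ V) X) {Γ}
    (hρ : InvRen ρ Γ Δ) : HasV sg Γ V X :=
  match V, h with
  | .var _, .var hl hm =>
    let ⟨_, h1, h2⟩ := hρ _ _ _ hl
    .var h1 (fun hb => hm (h2 hb))
  | .unit, .unit => .unit
  | .pair a b, .pair ha hb => .pair (unrenV_pres a ha hρ) (unrenV_pres b hb hρ)
  | .inl a, .inl ha => .inl (unrenV_pres a ha hρ)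
  | .inr a, .inr ha => .inr (unrenV_pres a ha hρ)
  | .lam m, .lam hm => .lam (unrenC_pres m hm (hρ.lift _))
  | .prom a, .prom ha => .prom (unrenV_pres a ha hρ)
  | .box a, .box ha => .box (unrenV_pres a ha hρ.lock)

theorem unrenC_pres (M : Comp Op) {Δ X o ι ρ} (h : HasC sg Δ (renameC ρ M) X o ι) {Γ}
    (hρ : InvRen ρ Γ Δ) : HasC sg Γ M X o ι :=
  match M with
  | .ret v => .ret (unrenV_pres v (inv_ret h) hρ)
  | .letin m n =>
    let ⟨Z, h1, h2⟩ := inv_letin h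
    .letin (unrenC_pres m h1 hρ) (unrenC_pres n h2 (hρ.lift Z))
  | .app v w =>
    let ⟨A, o₀, ι₀, hv, hw, ho, hι⟩ := inv_app h
    .subsume (.app (unrenV_pres v hv hρ) (unrenV_pres w hw hρ)) ho hι
  | .matchPair v m =>
    let ⟨A, B, hv, hm⟩ := inv_matchPair h
    .matchPair (unrenV_pres v hv hρ) (unrenC_pres m hm ((hρ.lift A).lift B))
  | .matchEmpty v => .matchEmpty (unrenV_pres v (inv_matchEmpty h) hρ)
  | .matchSum v m n =>
    let ⟨A, B, hv, hm, hn⟩ := inv_matchSum h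
    .matchSum (unrenV_pres v hv hρ) (unrenC_pres m hm (hρ.lift A)) (unrenC_pres n hn (hρ.lift B))
  | .sig op v m =>
    let ⟨ho, hv, hm⟩ := inv_sig h
    .sig ho (unrenV_pres v hv hρ) (unrenC_pres m hm hρ)
  | .int op v m =>
    let ⟨o₀, ι₀, hv, hm, h1, h2⟩ := inv_int h
    .subsume (.int (unrenV_pres v hv hρ) (unrenC_pres m hm hρ)) h1 h2
  | .handler op m v n =>
    let ⟨S, A, o', ι', o'', c1, c2, c3, hm, hv, hn⟩ := inv_handler h
    .handler c1 c2 c3 (unrenC_pres m hm (((hρ.lift _).lift _).lift _))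
      (unrenV_pres v hv hρ) (unrenC_pres n hn (hρ.lift _))
  | .await v m =>
    let ⟨A, hv, hm⟩ := inv_await h
    .await (unrenV_pres v hv hρ) (unrenC_pres m hm (hρ.lift A))
  | .unbox v m =>
    let ⟨A, hv, hm⟩ := inv_unbox h
    .unbox (unrenV_pres v hv hρ) (unrenC_pres m hm (hρ.lift A))
  | .spawn m n =>
    let ⟨⟨A, o₀, ι₀, hm⟩, hn⟩ := inv_spawn h
    .spawn (unrenC_pres m hm hρ.lock) (unrenC_pres n hn hρ)
end

end RenPres
section Subst

variable {Op : Type} [DecidableEq Op] {sg : Op → VTy Op}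

/-- Values of mobile type can be typed in any context with the same variable types,
irrespective of locks. -/
theorem mobile_hasV {X : VTy Op} (hX : Mobile X) :
    ∀ {V : Val Op} {Γ Δ : Ctx Op}, HasV sg Γ V X →
      (∀ n Y b, Lookup Γ n Y b → ∃ b', Lookup Δ n Y b') → HasV sg Δ V X := by
  induction hX with
  | base =>
    intro V Γ Δ h hΔ
    cases h with
    | var hl hm =>
      obtain ⟨b', hl'⟩ := hΔ _ _ _ hl
      exact .var hl' (fun _ => Mobile.base)
  | unit =>
    intro V Γ Δ h hΔ
    cases h with
    | var hl hm =>
      obtain ⟨b', hl'⟩ := hΔ _ _ _ hl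
      exact .var hl' (fun _ => Mobile.unit)
    | unit => exact .unit
  | empty =>
    intro V Γ Δ h hΔ
    cases h with
    | var hl hm =>
      obtain ⟨b', hl'⟩ := hΔ _ _ _ hl
      exact .var hl' (fun _ => Mobile.empty)
  | prod hA hB ihA ihB =>
    intro V Γ Δ h hΔ
    cases h with
    | var hl hm =>
      obtain ⟨b', hl'⟩ := hΔ _ _ _ hl
      exact .var hl' (fun _ => Mobile.prod hA hB)
    | pair h1 h2 => exact .pair (ihA h1 hΔ) (ihB h2 hΔ)
  | sum hA hB ihA ihB =>
    intro V Γ Δ h hΔ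
    cases h with
    | var hl hm =>
      obtain ⟨b', hl'⟩ := hΔ _ _ _ hl
      exact .var hl' (fun _ => Mobile.sum hA hB)
    | inl h1 => exact .inl (ihA h1 hΔ)
    | inr h1 => exact .inr (ihB h1 hΔ)
  | box =>
    intro V Γ Δ h hΔ
    cases h with
    | var hl hm =>
      obtain ⟨b', hl'⟩ := hΔ _ _ _ hl
      exact .var hl' (fun _ => Mobile.box)
    | box h1 =>
      refine .box ?_
      have hρ : Ren id (CtxE.lock :: Γ) (CtxE.lock :: Δ) := by
        intro n Y b hl
        cases hl with
        | thereLock hl0 =>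
          obtain ⟨b', hl'⟩ := hΔ _ _ _ hl0
          exact ⟨true, .thereLock hl', fun _ => rfl⟩
      have := renV_pres _ h1 hρ
      rwa [renameV_id] at this

/-- Well-typedness of a substitution. -/
def SubOK (sg : Op → VTy Op) (σ : ℕ → Val Op) (Γ Δ : Ctx Op) : Prop :=
  ∀ n X b, Lookup Γ n X b → (b = true → Mobile X) → HasV sg Δ (σ n) X

theorem SubOK.lift {σ : ℕ → Val Op} {Γ Δ : Ctx Op} (h : SubOK sg σ Γ Δ) (Z : VTy Op) :
    SubOK sg (liftS σ) (CtxE.tyvar Z :: Γ) (CtxE.tyvar Z :: Δ) := by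
  intro n X b hl hm
  cases hl with
  | here => exact .var .here (fun h => nomatch h)
  | thereVar hl => exact renV_pres _ (h _ _ _ hl hm) (Ren.succ Z)

theorem SubOK.lock {σ : ℕ → Val Op} {Γ Δ : Ctx Op} (h : SubOK sg σ Γ Δ) :
    SubOK sg σ (CtxE.lock :: Γ) (CtxE.lock :: Δ) := by
  intro n X b hl hm
  cases hl with
  | thereLock hl0 =>
    exact mobile_hasV (hm rfl) (h _ _ _ hl0 (fun _ => hm rfl))
      (fun n Y b hl => ⟨true, .thereLock hl⟩)

mutual
theorem subV_pres (V : Val Op) {Γ X} (h : HasV sg Γ V X) {σ Δ} (hσ : SubOK sg σ Γ Δ) :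
    HasV sg Δ (substV σ V) X :=
  match V, h with
  | .var _, .var hl hm => hσ _ _ _ hl hm
  | .unit, .unit => .unit
  | .pair a b, .pair ha hb => .pair (subV_pres a ha hσ) (subV_pres b hb hσ)
  | .inl a, .inl ha => .inl (subV_pres a ha hσ)
  | .inr a, .inr ha => .inr (subV_pres a ha hσ)
  | .lam m, .lam hm => .lam (subC_pres m hm (hσ.lift _))
  | .prom a, .prom ha => .prom (subV_pres a ha hσ)
  | .box a, .box ha => .box (subV_pres a ha hσ.lock)

theorem subC_pres (M : Comp Op) {Γ X o ι} (h : HasC sg Γ M X o ι) {σ Δ} (hσ : SubOK sg σ Γ Δ) :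
    HasC sg Δ (substC σ M) X o ι :=
  match M with
  | .ret v => .ret (subV_pres v (inv_ret h) hσ)
  | .letin m n =>
    let ⟨Z, h1, h2⟩ := inv_letin h
    .letin (subC_pres m h1 hσ) (subC_pres n h2 (hσ.lift Z))
  | .app v w =>
    let ⟨A, o₀, ι₀, hv, hw, ho, hι⟩ := inv_app h
    .subsume (.app (subV_pres v hv hσ) (subV_pres w hw hσ)) ho hι
  | .matchPair v m =>
    let ⟨A, B, hv, hm⟩ := inv_matchPair h
    .matchPair (subV_pres v hv hσ) (subC_pres m hm ((hσ.lift A).lift B))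
  | .matchEmpty v => .matchEmpty (subV_pres v (inv_matchEmpty h) hσ)
  | .matchSum v m n =>
    let ⟨A, B, hv, hm, hn⟩ := inv_matchSum h
    .matchSum (subV_pres v hv hσ) (subC_pres m hm (hσ.lift A)) (subC_pres n hn (hσ.lift B))
  | .sig op v m =>
    let ⟨ho, hv, hm⟩ := inv_sig h
    .sig ho (subV_pres v hv hσ) (subC_pres m hm hσ)
  | .int op v m =>
    let ⟨o₀, ι₀, hv, hm, h1, h2⟩ := inv_int h
    .subsume (.int (subV_pres v hv hσ) (subC_pres m hm hσ)) h1 h2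
  | .handler op m v n =>
    let ⟨S, A, o', ι', o'', c1, c2, c3, hm, hv, hn⟩ := inv_handler h
    .handler c1 c2 c3 (subC_pres m hm (((hσ.lift _).lift _).lift _))
      (subV_pres v hv hσ) (subC_pres n hn (hσ.lift _))
  | .await v m =>
    let ⟨A, hv, hm⟩ := inv_await h
    .await (subV_pres v hv hσ) (subC_pres m hm (hσ.lift A))
  | .unbox v m =>
    let ⟨A, hv, hm⟩ := inv_unbox h
    .unbox (subV_pres v hv hσ) (subC_pres m hm (hσ.lift A))
  | .spawn m n =>
    let ⟨⟨A, o₀, ι₀, hm⟩, hn⟩ := inv_spawn h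
    .spawn (subC_pres m hm hσ.lock) (subC_pres n hn hσ)
end

theorem subOK_sub1 {Γ : Ctx Op} {V A} (hV : HasV sg Γ V A) :
    SubOK sg (sub1 V) (CtxE.tyvar A :: Γ) Γ := by
  intro n X b hl hm
  cases hl with
  | here => exact hV
  | thereVar hl => exact .var hl hm

theorem subOK_sub2 {Γ : Ctx Op} {V W A B} (hV : HasV sg Γ V A) (hW : HasV sg Γ W B) :
    SubOK sg (sub2 V W) (CtxE.tyvar B :: CtxE.tyvar A :: Γ) Γ := by
  intro n X b hl hm
  cases hl with
  | here => exact hW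
  | thereVar hl =>
    cases hl with
    | here => exact hV
    | thereVar hl => exact .var hl hm

theorem subOK_sub3 {Γ : Ctx Op} {V R W A B S} (hV : HasV sg Γ V A) (hR : HasV sg Γ R B)
    (hW : HasV sg Γ W S) :
    SubOK sg (sub3 V R W) (CtxE.tyvar S :: CtxE.tyvar B :: CtxE.tyvar A :: Γ) Γ := by
  intro n X b hl hm
  cases hl with
  | here => exact hW
  | thereVar hl =>
    cases hl with
    | here => exact hR
    | thereVar hl =>
      cases hl with
      | here => exact hV
      | thereVar hl => exact .var hl hm

theorem reinstall_ty {Γ : Ctx Op} {S X op o' ι'} {M : Comp Op}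
    (hM : HasC sg (CtxE.tyvar S ::
      CtxE.tyvar (.fn S (.prom X) (∅ : Set Op) (IAnn.single op o' ι')) ::
      CtxE.tyvar (sg op) :: Γ) M (.prom X) o' ι') :
    HasV sg Γ (reinstall op M) (.fn S (.prom X) (∅ : Set Op) (IAnn.single op o' ι')) := by
  refine .lam (.handler (o'' := o') IAnn.single_val subset_rfl IAnn.le_single_subtree
    ?_ (.var .here (fun h => nomatch h)) (.ret (.var .here (fun h => nomatch h))))
  exact renC_pres M hM ((((Ren.succ S).lift _).lift _).lift _)

end Subst
section Main

variable {Op : Type} [DecidableEq Op] {sg : Op → VTy Op}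

theorem pres_aux {M N : Comp Op} (hs : Step M N) :
    ∀ {Γ : Ctx Op} {X : VTy Op} {o : Set Op} {ι : IAnn Op},
      HasC sg Γ M X o ι → HasC sg Γ N X o ι := by
  induction hs with
  | beta =>
    intro Γ X o ι ht
    obtain ⟨A, o₀, ι₀, hlam, hV, ho, hι⟩ := inv_app ht
    cases hlam with
    | lam hM => exact .subsume (subC_pres _ hM (subOK_sub1 hV)) ho hι
  | letRet =>
    intro Γ X o ι ht
    obtain ⟨A, h1, h2⟩ := inv_letin ht
    exact subC_pres _ h2 (subOK_sub1 (inv_ret h1))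
  | matchPair =>
    intro Γ X o ι ht
    obtain ⟨A, B, hp, hM⟩ := inv_matchPair ht
    cases hp with
    | pair hV hW => exact subC_pres _ hM (subOK_sub2 hV hW)
  | matchInl =>
    intro Γ X o ι ht
    obtain ⟨A, B, hv, hM, hN⟩ := inv_matchSum ht
    cases hv with
    | inl hV => exact subC_pres _ hM (subOK_sub1 hV)
  | matchInr =>
    intro Γ X o ι ht
    obtain ⟨A, B, hv, hM, hN⟩ := inv_matchSum ht
    cases hv with
    | inr hW => exact subC_pres _ hN (subOK_sub1 hW)
  | letSig =>
    intro Γ X o ι ht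
    obtain ⟨A, h1, h2⟩ := inv_letin ht
    obtain ⟨hop, hV, hM⟩ := inv_sig h1
    exact .sig hop hV (.letin hM h2)
  | letHandler =>
    intro Γ X o ι ht
    obtain ⟨A, h1, h2⟩ := inv_letin ht
    obtain ⟨S, B, o', ι', o'', c1, c2, c3, hM, hV, hN⟩ := inv_handler h1
    exact .handler c1 c2 c3 hM hV (.letin hN (renC_pres _ h2 ((Ren.succ _).lift A)))
  | letAwait =>
    intro Γ X o ι ht
    obtain ⟨A, h1, h2⟩ := inv_letin ht
    obtain ⟨B, hV, hM⟩ := inv_await h1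
    exact .await hV (.letin hM (renC_pres _ h2 ((Ren.succ _).lift A)))
  | letSpawn =>
    intro Γ X o ι ht
    obtain ⟨A, h1, h2⟩ := inv_letin ht
    obtain ⟨⟨B, o₀, ι₀, hm⟩, hn⟩ := inv_spawn h1
    exact .spawn hm (.letin hn h2)
  | handlerSig =>
    intro Γ X o ι ht
    obtain ⟨S, B, o', ι', o'', c1, c2, c3, hM, hV, hsig⟩ := inv_handler ht
    obtain ⟨hop, hW, hN⟩ := inv_sig hsig
    exact .sig hop (unrenV_pres _ hW (InvRen.succ _)) (.handler c1 c2 c3 hM hV hN)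
  | handlerSpawn =>
    intro Γ X o ι ht
    obtain ⟨S, B, o', ι', o'', c1, c2, c3, hM, hV, hsp⟩ := inv_handler ht
    obtain ⟨⟨A, o₀, ι₀, hm⟩, hn⟩ := inv_spawn hsp
    exact .spawn (unrenC_pres _ hm ((InvRen.succ _).lock)) (.handler c1 c2 c3 hM hV hn)
  | intRet =>
    intro Γ X o ι ht
    obtain ⟨o₀, ι₀, hV, hM, h1, h2⟩ := inv_int ht
    exact .ret (inv_ret hM)
  | intSig =>
    intro Γ X o ι ht
    obtain ⟨o₀, ι₀, hV, hM, h1, h2⟩ := inv_int ht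
    obtain ⟨hop, hW, hm⟩ := inv_sig hM
    exact .sig (h1 (IAnn.act_fst _ _ hop)) hW (.subsume (.int hV hm) h1 h2)
  | intHandler =>
    intro Γ X o ι ht
    obtain ⟨o₀, ι₀, hV, hH, h1, h2⟩ := inv_int ht
    obtain ⟨S, B, o', ι', o'', c1, c2, c3, hM, hW, hN⟩ := inv_handler hH
    have hact : IAnn.act _ (o₀, ι₀) =
        (o₀ ∪ o'', IAnn.join (IAnn.update ι₀ _) (IAnn.subtree ι₀ _)) := IAnn.act_eq_some c1
    have h1' := h1; have h2' := h2
    rw [hact] at h1' h2'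
    have ho' : o' ⊆ o := (c2.trans (Set.subset_union_right)).trans h1'
    have hι' : IAnn.le ι' ι := IAnn.le_trans c3 (IAnn.le_trans (IAnn.le_join_right _ _) h2')
    refine .letin (.subsume (subC_pres _ hM (subOK_sub3 hV (reinstall_ty hM) hW)) ho' hι') ?_
    exact .subsume (.int (renV_pres _ hV (Ren.succ _)) hN) h1 h2
  | intHandlerNeq hne =>
    intro Γ X o ι ht
    obtain ⟨o₀, ι₀, hV, hH, h1, h2⟩ := inv_int ht
    obtain ⟨S, B, o', ι', o'', c1, c2, c3, hM, hW, hN⟩ := inv_handler hH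
    obtain ⟨b1, hb1, hsb1⟩ := IAnn.act_val_other hne (o₀, ι₀) c1
    obtain ⟨b2, hb2, hsb2⟩ := h2 _ _ hb1
    refine .handler hb2 (c2.trans (hsb1.trans hsb2))
      (IAnn.le_trans c3 (IAnn.le_trans (IAnn.act_subtree_other hne (o₀, ι₀))
        (IAnn.subtree_mono _ h2))) hM hW ?_
    exact .subsume (.int (renV_pres _ hV (Ren.succ _)) hN) h1 h2
  | intAwait =>
    intro Γ X o ι ht
    obtain ⟨o₀, ι₀, hV, hA, h1, h2⟩ := inv_int ht
    obtain ⟨B, hW, hM⟩ := inv_await hA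
    exact .await hW (.subsume (.int (renV_pres _ hV (Ren.succ _)) hM) h1 h2)
  | intSpawn =>
    intro Γ X o ι ht
    obtain ⟨o₀, ι₀, hV, hsp, h1, h2⟩ := inv_int ht
    obtain ⟨⟨A, oa, ιa, hm⟩, hn⟩ := inv_spawn hsp
    exact .spawn hm (.subsume (.int hV hn) h1 h2)
  | awaitProm =>
    intro Γ X o ι ht
    obtain ⟨B, hp, hM⟩ := inv_await ht
    cases hp with
    | prom hV => exact subC_pres _ hM (subOK_sub1 hV)
  | unboxBox =>
    intro Γ X o ι ht
    obtain ⟨B, hb, hM⟩ := inv_unbox ht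
    cases hb with
    | box hV =>
      have hV' := renV_pres _ hV Ren.unlock
      rw [renameV_id] at hV'
      exact subC_pres _ hM (subOK_sub1 hV')
  | ctxLet _ ih =>
    intro Γ X o ι ht
    obtain ⟨A, h1, h2⟩ := inv_letin ht
    exact .letin (ih h1) h2
  | ctxSig _ ih =>
    intro Γ X o ι ht
    obtain ⟨hop, hV, hM⟩ := inv_sig ht
    exact .sig hop hV (ih hM)
  | ctxInt _ ih =>
    intro Γ X o ι ht
    obtain ⟨o₀, ι₀, hV, hM, h1, h2⟩ := inv_int ht
    exact .subsume (.int hV (ih hM)) h1 h2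
  | ctxHandler _ ih =>
    intro Γ X o ι ht
    obtain ⟨S, B, o', ι', o'', c1, c2, c3, hM, hV, hN⟩ := inv_handler ht
    exact .handler c1 c2 c3 hM hV (ih hN)
  | ctxSpawn _ ih =>
    intro Γ X o ι ht
    obtain ⟨⟨A, oa, ιa, hm⟩, hn⟩ := inv_spawn ht
    exact .spawn hm (ih hn)

end Main
/-- Type preservation for computations: if `Γ ⊢ M : X!(o,ι)` and `M ⇝ N`,
then `Γ ⊢ N : X!(o,ι)`.  (The signature `sg` assigns mobile payload types to
all signal and interrupt names.) -/
theorem preservation_computations {Op : Type} [DecidableEq Op]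
    (sg : Op → VTy Op) (hmob : ∀ op : Op, Mobile (sg op))
    (Γ : Ctx Op) (M N : Comp Op) (X : VTy Op) (o : Set Op) (ι : IAnn Op)
    (ht : HasC sg Γ M X o ι) (hs : Step M N) :
    HasC sg Γ N X o ι := by
  exact pres_aux hs ht
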